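/- arXiv:0911.3531 — 2 statements merged into one kernel-verified Lean document; each statement's English description precedes it below -/
import Mathlib

section
/- Let X_1, ..., X_m be independent random variables each taking values in (0,1). Define Q^L = -2 log(∏_{j=1}^m X_j), Q^R = -2 log(∏_{j=1}^m (1 - X_j)), and Q^C = max(Q^L, Q^R). Then for any real A, letting P_L = Pr(Q^L > A), P_R = Pr(Q^R > A), and P_T = Pr(Q^C > A), we have P_L + P_R - P_L·P_R ≤ P_T ≤ P_L + P_R. -/
/-!
Since `Q^C > A` exactly when `Q^L > A` or `Q^R > A`, inclusion–exclusion gives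
`P_T = P_L + P_R - Pr(Q^L > A, Q^R > A)`, which yields the upper bound at once. For the lower
bound, `{Q^L > A} = {∏ X_j < e^{-A/2}}` is a decreasing event of the independent coordinates
`X_j` and `{Q^R > A}` an increasing one, so by Harris' inequality they are negatively correlated:
`Pr(Q^L > A, Q^R > A) ≤ P_L P_R`. Harris' inequality for a product of probability measures on a
linear order is proved by induction on the number of coordinates through Fubini; the
one-dimensional case is Chebyshev's integral inequality, which comes from integrating
`(u x - u y) (v y - v x) ≥ 0` against `ν ⊗ ν`.
-/

open MeasureTheory ProbabilityTheory Real Finset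

theorem IsUpperSet.monotone_indicator_one {β : Type*} [Preorder β] {s : Set β}
    (hs : IsUpperSet s) : Monotone (s.indicator (1 : β → ℝ)) := fun x y hxy ↦ by
  by_cases hx : x ∈ s
  · simp [hx, hs hxy hx]
  · simp [hx, Set.indicator_nonneg]

theorem IsLowerSet.antitone_indicator_one {β : Type*} [Preorder β] {s : Set β}
    (hs : IsLowerSet s) : Antitone (s.indicator (1 : β → ℝ)) := fun x y hxy ↦ by
  by_cases hy : y ∈ s
  · simp [hy, hs hxy hy]
  · simp [hy, Set.indicator_nonneg]

section Harris

variable {α : Type*} [MeasurableSpace α]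

section FinCons

variable {n : ℕ} (μ : Measure (Fin n → α)) {F : (Fin (n + 1) → α) → ℝ}

theorem measurable_finCons :
    Measurable fun p : α × (Fin n → α) ↦ (Fin.cons p.1 p.2 : Fin (n + 1) → α) :=
  measurable_pi_lambda _ fun i ↦ Fin.cases (by simpa using measurable_fst)
    (fun j ↦ by simpa [Function.comp_def] using (measurable_pi_apply j).comp measurable_snd) i

theorem integral_pi_fin_succ {ν : Fin (n + 1) → Measure α} [∀ i, SigmaFinite (ν i)]
    (hF : Integrable F (Measure.pi ν)) :
    ∫ x, F x ∂Measure.pi ν = ∫ t, ∫ y, F (Fin.cons t y) ∂Measure.pi (fun j ↦ ν j.succ) ∂ν 0 := by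
  have hmp := (measurePreserving_piFinSuccAbove ν 0).symm
  have hint : Integrable (fun z ↦ F ((MeasurableEquiv.piFinSuccAbove (fun _ ↦ α) 0).symm z))
      ((ν 0).prod (Measure.pi fun j ↦ ν (Fin.succAbove 0 j))) :=
    (hmp.integrable_comp_emb (MeasurableEquiv.measurableEmbedding _)).2 hF
  rw [← hmp.integral_comp', integral_prod _ hint]
  simp [MeasurableEquiv.piFinSuccAbove_symm_apply, Fin.insertNthEquiv]

theorem measurable_integral_finCons [SFinite μ] (hF : Measurable F) :
    Measurable fun t ↦ ∫ y, F (Fin.cons t y) ∂μ :=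
  (hF.comp measurable_finCons).stronglyMeasurable.integral_prod_right'.measurable

theorem norm_integral_finCons_le [IsProbabilityMeasure μ] {C : ℝ} (hC : ∀ x, ‖F x‖ ≤ C)
    (t : α) : ‖∫ y, F (Fin.cons t y) ∂μ‖ ≤ C := by
  simpa using norm_integral_le_of_norm_le_const (μ := μ) (ae_of_all _ fun y ↦ hC (Fin.cons t y))

theorem integrable_finCons [IsFiniteMeasure μ] {C : ℝ} (hF : Measurable F)
    (hC : ∀ x, ‖F x‖ ≤ C) (t : α) : Integrable (fun y ↦ F (Fin.cons t y)) μ :=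
  .of_bound (hF.comp (measurable_finCons.comp measurable_prodMk_left)).aestronglyMeasurable C
    (ae_of_all _ fun _ ↦ hC _)

variable [Preorder α] [IsFiniteMeasure μ] {C : ℝ}

theorem Monotone.integral_finCons (hF : Measurable F) (hC : ∀ x, ‖F x‖ ≤ C) (hmono : Monotone F) :
    Monotone fun t ↦ ∫ y, F (Fin.cons t y) ∂μ := fun _ _ h ↦
  integral_mono (integrable_finCons μ hF hC _) (integrable_finCons μ hF hC _)
    fun _ ↦ hmono (Fin.cons_le_cons.2 ⟨h, le_rfl⟩)

theorem Antitone.integral_finCons (hF : Measurable F) (hC : ∀ x, ‖F x‖ ≤ C) (hanti : Antitone F) :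
    Antitone fun t ↦ ∫ y, F (Fin.cons t y) ∂μ := fun _ _ h ↦
  integral_mono (integrable_finCons μ hF hC _) (integrable_finCons μ hF hC _)
    fun _ ↦ hanti (Fin.cons_le_cons.2 ⟨h, le_rfl⟩)

end FinCons

variable [LinearOrder α]

theorem integral_mul_le_integral_mul_integral_of_antitone_of_monotone
    {ν : Measure α} [IsProbabilityMeasure ν] {u v : α → ℝ} (hu : Integrable u ν)
    (hv : Integrable v ν) (huv : Integrable (fun x ↦ u x * v x) ν) (hu_anti : Antitone u)
    (hv_mono : Monotone v) :
    ∫ x, u x * v x ∂ν ≤ (∫ x, u x ∂ν) * ∫ x, v x ∂ν := by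
  have hnonneg : 0 ≤ ∫ p, (u p.1 - u p.2) * (v p.2 - v p.1) ∂ν.prod ν := by
    refine integral_nonneg fun p ↦ ?_
    rcases le_total p.1 p.2 with h | h
    · exact mul_nonneg (sub_nonneg.2 (hu_anti h)) (sub_nonneg.2 (hv_mono h))
    · exact mul_nonneg_of_nonpos_of_nonpos (sub_nonpos.2 (hu_anti h)) (sub_nonpos.2 (hv_mono h))
  have hexpand : (fun p : α × α ↦ (u p.1 - u p.2) * (v p.2 - v p.1))
      = ((fun p ↦ u p.1 * v p.2) + (fun p ↦ v p.1 * u p.2))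
        - ((fun p ↦ u p.1 * v p.1) + (fun p ↦ u p.2 * v p.2)) := by
    ext p; simp only [Pi.add_apply, Pi.sub_apply]; ring
  rw [hexpand, integral_sub' ((hu.mul_prod hv).add (hv.mul_prod hu))
      ((huv.comp_fst ν).add (huv.comp_snd ν)),
    integral_add' (hu.mul_prod hv) (hv.mul_prod hu),
    integral_add' (huv.comp_fst ν) (huv.comp_snd ν), integral_prod_mul u v, integral_prod_mul v u,
    integral_fun_fst (fun x ↦ u x * v x), integral_fun_snd (fun x ↦ u x * v x)] at hnonneg
  simp only [probReal_univ, one_smul] at hnonneg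
  linarith

theorem integral_mul_le_integral_mul_integral_pi_of_antitone_of_monotone {n : ℕ}
    {ν : Fin n → Measure α} [∀ i, IsProbabilityMeasure (ν i)] {f g : (Fin n → α) → ℝ}
    {C D : ℝ} (hf : Measurable f) (hg : Measurable g) (hfC : ∀ x, ‖f x‖ ≤ C)
    (hgD : ∀ x, ‖g x‖ ≤ D) (hf_anti : Antitone f) (hg_mono : Monotone g) :
    ∫ x, f x * g x ∂Measure.pi ν ≤ (∫ x, f x ∂Measure.pi ν) * ∫ x, g x ∂Measure.pi ν := by
  induction n generalizing C D with
  | zero =>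
    rw [Measure.pi_of_empty (x := isEmptyElim)]
    simp
  | succ n ih =>
    set μ := Measure.pi fun j : Fin n ↦ ν j.succ
    have hfg : ∀ x, ‖f x * g x‖ ≤ C * D := fun x ↦ norm_mul_le_of_le (hfC x) (hgD x)
    have hint : ∀ {F : (Fin (n + 1) → α) → ℝ} {B : ℝ}, Measurable F → (∀ x, ‖F x‖ ≤ B) →
        Integrable F (Measure.pi ν) :=
      fun hF hB ↦ .of_bound hF.aestronglyMeasurable _ (ae_of_all _ hB)
    have hslice : ∀ t, ∫ y, f (Fin.cons t y) * g (Fin.cons t y) ∂μ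
        ≤ (∫ y, f (Fin.cons t y) ∂μ) * ∫ y, g (Fin.cons t y) ∂μ := fun t ↦
      ih (hf.comp (measurable_finCons.comp measurable_prodMk_left))
        (hg.comp (measurable_finCons.comp measurable_prodMk_left)) (fun _ ↦ hfC _) (fun _ ↦ hgD _)
        (fun _ _ h ↦ hf_anti (Fin.cons_le_cons.2 ⟨le_rfl, h⟩))
        (fun _ _ h ↦ hg_mono (Fin.cons_le_cons.2 ⟨le_rfl, h⟩))
    have hU := measurable_integral_finCons μ hf
    have hV := measurable_integral_finCons μ hg
    have hUV : Integrable (fun t ↦ (∫ y, f (Fin.cons t y) ∂μ) * ∫ y, g (Fin.cons t y) ∂μ) (ν 0) :=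
      .of_bound (hU.mul hV).aestronglyMeasurable (C * D) (ae_of_all _ fun t ↦
        norm_mul_le_of_le (norm_integral_finCons_le μ hfC t) (norm_integral_finCons_le μ hgD t))
    calc ∫ x, f x * g x ∂Measure.pi ν
        = ∫ t, ∫ y, f (Fin.cons t y) * g (Fin.cons t y) ∂μ ∂ν 0 :=
          integral_pi_fin_succ (F := fun x ↦ f x * g x) (hint (hf.mul hg) hfg)
      _ ≤ ∫ t, (∫ y, f (Fin.cons t y) ∂μ) * ∫ y, g (Fin.cons t y) ∂μ ∂ν 0 :=
          integral_mono (.of_bound (measurable_integral_finCons μ (hf.mul hg)).aestronglyMeasurable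
            (C * D) (ae_of_all _ (norm_integral_finCons_le μ hfg))) hUV hslice
      _ ≤ (∫ t, ∫ y, f (Fin.cons t y) ∂μ ∂ν 0) * ∫ t, ∫ y, g (Fin.cons t y) ∂μ ∂ν 0 :=
          integral_mul_le_integral_mul_integral_of_antitone_of_monotone
            (.of_bound hU.aestronglyMeasurable C (ae_of_all _ (norm_integral_finCons_le μ hfC)))
            (.of_bound hV.aestronglyMeasurable D (ae_of_all _ (norm_integral_finCons_le μ hgD))) hUV
            (hf_anti.integral_finCons μ hf hfC) (hg_mono.integral_finCons μ hg hgD)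
      _ = (∫ x, f x ∂Measure.pi ν) * ∫ x, g x ∂Measure.pi ν := by
          rw [integral_pi_fin_succ (hint hf hfC), integral_pi_fin_succ (hint hg hgD)]

theorem measureReal_inter_le_of_isLowerSet_of_isUpperSet {n : ℕ}
    {ν : Fin n → Measure α} [∀ i, IsProbabilityMeasure (ν i)] {s t : Set (Fin n → α)}
    (hs : MeasurableSet s) (ht : MeasurableSet t) (hs_lower : IsLowerSet s)
    (ht_upper : IsUpperSet t) :
    (Measure.pi ν).real (s ∩ t) ≤ (Measure.pi ν).real s * (Measure.pi ν).real t := by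
  have hbound : ∀ {u : Set (Fin n → α)} x, ‖u.indicator (1 : (Fin n → α) → ℝ) x‖ ≤ 1 :=
    fun x ↦ (norm_indicator_le_norm_self _ x).trans (by simp)
  have hmul : ∀ x,
      s.indicator (1 : (Fin n → α) → ℝ) x * t.indicator 1 x = (s ∩ t).indicator 1 x :=
    fun x ↦ by rw [Set.inter_indicator_one, Pi.mul_apply]
  have := integral_mul_le_integral_mul_integral_pi_of_antitone_of_monotone (ν := ν)
    (measurable_one.indicator hs) (measurable_one.indicator ht) hbound hbound
    hs_lower.antitone_indicator_one ht_upper.monotone_indicator_one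
  simp_rw [hmul, integral_indicator_one hs, integral_indicator_one ht,
    integral_indicator_one (hs.inter ht)] at this
  exact this

theorem ProbabilityTheory.iIndepFun.measureReal_inter_preimage_le {Ω : Type*}
    [MeasurableSpace Ω] {μ : Measure Ω} [IsProbabilityMeasure μ] {n : ℕ}
    {Y : Fin n → Ω → α} (hY : ∀ i, Measurable (Y i)) (hindep : iIndepFun Y μ)
    {s t : Set (Fin n → α)} (hs : MeasurableSet s) (ht : MeasurableSet t)
    (hs_lower : IsLowerSet s) (ht_upper : IsUpperSet t) :
    μ.real ((fun ω i ↦ Y i ω) ⁻¹' s ∩ (fun ω i ↦ Y i ω) ⁻¹' t)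
      ≤ μ.real ((fun ω i ↦ Y i ω) ⁻¹' s) * μ.real ((fun ω i ↦ Y i ω) ⁻¹' t) := by
  have hYm : Measurable fun ω i ↦ Y i ω := measurable_pi_lambda _ hY
  have := fun i ↦ Measure.isProbabilityMeasure_map (μ := μ) (hY i).aemeasurable
  rw [← Set.preimage_inter, ← map_measureReal_apply hYm (hs.inter ht),
    ← map_measureReal_apply hYm hs, ← map_measureReal_apply hYm ht,
    hindep.map_fun_eq_pi_map fun i ↦ (hY i).aemeasurable]
  exact measureReal_inter_le_of_isLowerSet_of_isUpperSet hs ht hs_lower ht_upper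

end Harris

theorem ProbabilityTheory.iIndepFun.subtype_mk {Ω ι β : Type*} [MeasurableSpace Ω]
    [MeasurableSpace β] {μ : Measure Ω} {s : Set β} {X : ι → Ω → β} (hindep : iIndepFun X μ)
    (hs : ∀ i ω, X i ω ∈ s) : iIndepFun (fun i ω ↦ (⟨X i ω, hs i ω⟩ : s)) μ := by
  rw [iIndepFun_iff_iIndep] at hindep ⊢
  simp only [Subtype.instMeasurableSpace, MeasurableSpace.comap_comp]
  exact hindep

section UnitInterval

variable {ι : Type*} [Fintype ι]

theorem isLowerSet_setOf_prod_lt (a : ℝ) :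
    IsLowerSet {x : ι → Set.Ioo (0 : ℝ) 1 | ∏ i, (x i : ℝ) < a} := fun _ y hxy hx ↦
  (prod_le_prod (fun i _ ↦ (y i).2.1.le) fun i _ ↦ hxy i).trans_lt hx

theorem isUpperSet_setOf_prod_one_sub_lt (a : ℝ) :
    IsUpperSet {x : ι → Set.Ioo (0 : ℝ) 1 | ∏ i, (1 - (x i : ℝ)) < a} := fun x y hxy hx ↦
  (prod_le_prod (fun i _ ↦ sub_nonneg.2 (y i).2.2.le)
    fun i _ ↦ sub_le_sub_left (show (x i : ℝ) ≤ y i from hxy i) 1).trans_lt hx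

theorem measurableSet_setOf_prod_lt (a : ℝ) :
    MeasurableSet {x : ι → Set.Ioo (0 : ℝ) 1 | ∏ i, (x i : ℝ) < a} :=
  measurableSet_lt (by fun_prop) measurable_const

theorem measurableSet_setOf_prod_one_sub_lt (a : ℝ) :
    MeasurableSet {x : ι → Set.Ioo (0 : ℝ) 1 | ∏ i, (1 - (x i : ℝ)) < a} :=
  measurableSet_lt (by fun_prop) measurable_const

end UnitInterval

theorem lt_neg_two_mul_log_iff {p : ℝ} (hp : 0 < p) (A : ℝ) :
    A < -2 * log p ↔ p < exp (-(A / 2)) := by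
  rw [← log_lt_iff_lt_exp hp]
  constructor <;> intro h <;> linarith

theorem measureReal_union_bounds_of_inter_le {Ω : Type*} [MeasurableSpace Ω] {μ : Measure Ω}
    [IsFiniteMeasure μ] {s t : Set Ω} (ht : MeasurableSet t)
    (hst : μ.real (s ∩ t) ≤ μ.real s * μ.real t) :
    μ.real s + μ.real t - μ.real s * μ.real t ≤ μ.real (s ∪ t) ∧
      μ.real (s ∪ t) ≤ μ.real s + μ.real t := by
  have hunion := measureReal_union_add_inter (μ := μ) (s := s) ht
  have hinter : 0 ≤ μ.real (s ∩ t) := measureReal_nonneg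
  constructor <;> linarith

/-- Theorem 2 of Owen (2009): Bonferroni bounds for Pearson's concordant statistic.
If `X 1, ..., X m` are independent random variables with values in `(0,1)`,
`Q^L = -2 log ∏ X j`, `Q^R = -2 log ∏ (1 - X j)` and `Q^C = max (Q^L, Q^R)`, then
`P_L + P_R - P_L * P_R ≤ P_T ≤ P_L + P_R` where `P_L = Pr(Q^L > A)`,
`P_R = Pr(Q^R > A)` and `P_T = Pr(Q^C > A)`. -/
theorem stmt0 {Ω : Type*} [MeasurableSpace Ω] (μ : Measure Ω) [IsProbabilityMeasure μ]
    (m : ℕ) (X : Fin m → Ω → ℝ)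
    (hmeas : ∀ j, Measurable (X j))
    (hindep : iIndepFun X μ)
    (hrange : ∀ j ω, X j ω ∈ Set.Ioo (0 : ℝ) 1)
    (QL QR QC : Ω → ℝ)
    (hQL : ∀ ω, QL ω = -2 * Real.log (∏ j, X j ω))
    (hQR : ∀ ω, QR ω = -2 * Real.log (∏ j, (1 - X j ω)))
    (hQC : ∀ ω, QC ω = max (QL ω) (QR ω))
    (A : ℝ)
    (PL PR PT : ℝ)
    (hPL : PL = (μ {ω | QL ω > A}).toReal)
    (hPR : PR = (μ {ω | QR ω > A}).toReal)
    (hPT : PT = (μ {ω | QC ω > A}).toReal) :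
    PL + PR - PL * PR ≤ PT ∧ PT ≤ PL + PR := by
  -- Valued in `Ioo 0 1`, the products below are monotone in every coordinate.
  set Y : Ω → Fin m → Set.Ioo (0 : ℝ) 1 := fun ω j ↦ ⟨X j ω, hrange j ω⟩
  have hY : ∀ j, Measurable fun ω ↦ Y ω j := fun j ↦ (hmeas j).subtype_mk
  have hL : {ω | QL ω > A} = Y ⁻¹' {x | ∏ j, (x j : ℝ) < exp (-(A / 2))} := by
    ext ω
    simp only [Y, Set.mem_ofPred_eq, Set.mem_preimage, gt_iff_lt, hQL]
    exact lt_neg_two_mul_log_iff (prod_pos fun j _ ↦ (hrange j ω).1) A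
  have hR : {ω | QR ω > A} = Y ⁻¹' {x | ∏ j, (1 - (x j : ℝ)) < exp (-(A / 2))} := by
    ext ω
    simp only [Y, Set.mem_ofPred_eq, Set.mem_preimage, gt_iff_lt, hQR]
    exact lt_neg_two_mul_log_iff (prod_pos fun j _ ↦ sub_pos.2 (hrange j ω).2) A
  have hC : {ω | QC ω > A} = {ω | QL ω > A} ∪ {ω | QR ω > A} := by
    ext ω
    simp [hQC]
  have hR_meas : MeasurableSet {ω | QR ω > A} :=
    hR ▸ measurable_pi_lambda _ hY (measurableSet_setOf_prod_one_sub_lt _)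
  have hLR : μ.real ({ω | QL ω > A} ∩ {ω | QR ω > A})
      ≤ μ.real {ω | QL ω > A} * μ.real {ω | QR ω > A} := by
    rw [hL, hR]
    exact (hindep.subtype_mk hrange).measureReal_inter_preimage_le hY
      (measurableSet_setOf_prod_lt _) (measurableSet_setOf_prod_one_sub_lt _)
      (isLowerSet_setOf_prod_lt _) (isUpperSet_setOf_prod_one_sub_lt _)
  subst hPL hPR hPT
  rw [hC]
  exact measureReal_union_bounds_of_inter_le hR_meas hLR
end

section
/- Independent random variables are associated: if X_1, ..., X_n are independent real random variables and f, g : ℝⁿ → ℝ are both nondecreasing in each coordinate, then Cov(f(X), g(X)) ≥ 0, provided the covariance is defined. -/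
/-!
A measure is associated when bounded monotone functions are positively correlated under it.
On a linear order every probability measure is associated (Chebyshev's integral inequality:
integrate `(f y - f x) * (g y - g x) ≥ 0` against `ν ⊗ ν`). Association passes to products by
conditioning on the first coordinate: the conditional means are monotone, hence positively
correlated under the first factor, and on each fibre the second factor's association applies.
It also passes to images under monotone maps, so by induction the product of the laws of the
`X i`, which by independence is their joint law, is associated. Truncating `f` and `g` at level
`M` and letting `M → ∞` by dominated convergence removes the boundedness.
-/

open MeasureTheory ProbabilityTheory Filter Topology

theorem Monovary.integral_mul_integral_le_integral_mul {α : Type*} [MeasurableSpace α]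
    {ν : Measure α} [IsProbabilityMeasure ν] {f g : α → ℝ} (hmono : Monovary f g)
    (hf : Integrable f ν) (hg : Integrable g ν) (hfg : Integrable (fun x ↦ f x * g x) ν) :
    (∫ x, f x ∂ν) * (∫ x, g x ∂ν) ≤ ∫ x, f x * g x ∂ν := by
  have hdiag₁ : Integrable (fun p : α × α ↦ f p.1 * g p.1) (ν.prod ν) := hfg.comp_fst ν
  have hdiag₂ : Integrable (fun p : α × α ↦ f p.2 * g p.2) (ν.prod ν) := hfg.comp_snd ν
  have hcross₁ : Integrable (fun p : α × α ↦ f p.1 * g p.2) (ν.prod ν) := hf.mul_prod hg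
  have hcross₂ : Integrable (fun p : α × α ↦ g p.1 * f p.2) (ν.prod ν) := hg.mul_prod hf
  have hexpand : ∫ p, (f p.2 - f p.1) * (g p.2 - g p.1) ∂ν.prod ν
      = 2 * ((∫ x, f x * g x ∂ν) - (∫ x, f x ∂ν) * (∫ x, g x ∂ν)) := by
    have : (fun p : α × α ↦ (f p.2 - f p.1) * (g p.2 - g p.1)) =
        fun p ↦ f p.2 * g p.2 + f p.1 * g p.1 - f p.1 * g p.2 - g p.1 * f p.2 := by
      ext p; ring
    rw [this, integral_sub, integral_sub, integral_add hdiag₂ hdiag₁,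
      integral_fun_snd (fun x ↦ f x * g x), integral_fun_fst (fun x ↦ f x * g x),
      integral_prod_mul, integral_prod_mul]
    · simp only [probReal_univ, one_smul]
      ring
    exacts [hdiag₂.add hdiag₁, hcross₁, (hdiag₂.add hdiag₁).sub hcross₁, hcross₂]
  have hnonneg : 0 ≤ ∫ p, (f p.2 - f p.1) * (g p.2 - g p.1) ∂ν.prod ν :=
    integral_nonneg fun p ↦ hmono.sub_mul_sub_nonneg p.1 p.2
  linarith

def clip (M t : ℝ) : ℝ := max (-M) (min M t)

lemma monotone_clip (M : ℝ) : Monotone (clip M) :=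
  fun _ _ h ↦ max_le_max le_rfl (min_le_min le_rfl h)

lemma measurable_clip (M : ℝ) : Measurable (clip M) :=
  measurable_const.max (measurable_const.min measurable_id)

lemma abs_clip_le {M : ℝ} (hM : 0 ≤ M) (t : ℝ) : |clip M t| ≤ M :=
  abs_le.2 ⟨le_max_left _ _, max_le (by linarith) (min_le_left _ _)⟩

lemma abs_clip_le_abs {M : ℝ} (hM : 0 ≤ M) (t : ℝ) : |clip M t| ≤ |t| :=
  abs_le.2 ⟨le_max_of_le_right (le_min (by linarith [abs_nonneg t]) (neg_abs_le t)),
    max_le (by linarith [abs_nonneg t]) ((min_le_right _ _).trans (le_abs_self t))⟩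

lemma clip_of_abs_le {M t : ℝ} (h : |t| ≤ M) : clip M t = t := by
  rw [abs_le] at h
  rw [clip, min_eq_right h.2, max_eq_right h.1]

lemma tendsto_clip (t : ℝ) : Tendsto (fun M : ℕ ↦ clip M t) atTop (𝓝 t) := by
  refine tendsto_const_nhds.congr' ?_
  filter_upwards [eventually_ge_atTop ⌈|t|⌉₊] with M hM
  exact (clip_of_abs_le (Nat.ceil_le.1 hM)).symm

lemma MeasurableEquiv.monotone_piFinSuccAbove_symm {n : ℕ} {α : Fin (n + 1) → Type*}
    [∀ i, MeasurableSpace (α i)] [∀ i, Preorder (α i)] (i : Fin (n + 1)) :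
    Monotone (MeasurableEquiv.piFinSuccAbove α i).symm :=
  fun z z' hz ↦ show Fin.insertNth i z.1 z.2 ≤ Fin.insertNth i z'.1 z'.2 from
    Fin.insertNth_le_iff.2 ⟨hz.1.trans_eq (Fin.insertNth_apply_same i z'.1 z'.2).symm,
      fun j ↦ (hz.2 j).trans_eq (Fin.insertNth_apply_succAbove i z'.1 z'.2 j).symm⟩

namespace MeasureTheory.Measure

variable {α β : Type*} [MeasurableSpace α] [MeasurableSpace β]

def IsAssociated [Preorder α] (μ : Measure α) : Prop :=
  ∀ ⦃f g : α → ℝ⦄, Measurable f → Measurable g → Monotone f → Monotone g →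
    (∃ C, ∀ x, ‖f x‖ ≤ C) → (∃ C, ∀ x, ‖g x‖ ≤ C) →
    (∫ x, f x ∂μ) * (∫ x, g x ∂μ) ≤ ∫ x, f x * g x ∂μ

lemma _root_.Measurable.integrable_of_forall_norm_le {μ : Measure α} [IsFiniteMeasure μ]
    {f : α → ℝ} (hf : Measurable f) {C : ℝ} (hC : ∀ x, ‖f x‖ ≤ C) : Integrable f μ :=
  .of_bound hf.aestronglyMeasurable C (.of_forall hC)

theorem isAssociated_dirac [Preorder α] (a : α) : (dirac a).IsAssociated :=
  fun f g hf hg _ _ _ _ ↦ by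
    rw [integral_dirac' f a hf.stronglyMeasurable, integral_dirac' g a hg.stronglyMeasurable,
      integral_dirac' (fun x ↦ f x * g x) a (hf.mul hg).stronglyMeasurable]

theorem IsAssociated.map [Preorder α] [Preorder β] {μ : Measure α} (hμ : μ.IsAssociated)
    {e : α → β} (he : Measurable e) (he_mono : Monotone e) : (μ.map e).IsAssociated := by
  intro f g hf hg hf_mono hg_mono ⟨C, hC⟩ ⟨D, hD⟩
  rw [integral_map he.aemeasurable hf.aestronglyMeasurable,
    integral_map he.aemeasurable hg.aestronglyMeasurable,
    integral_map (f := fun x ↦ f x * g x) he.aemeasurable (hf.mul hg).aestronglyMeasurable]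
  exact hμ (hf.comp he) (hg.comp he) (hf_mono.comp he_mono) (hg_mono.comp he_mono)
    ⟨C, fun x ↦ hC (e x)⟩ ⟨D, fun x ↦ hD (e x)⟩

theorem isAssociated_of_linearOrder [LinearOrder α] (μ : Measure α) [IsProbabilityMeasure μ] :
    μ.IsAssociated := by
  intro f g hf hg hf_mono hg_mono ⟨C, hC⟩ ⟨D, hD⟩
  exact (hf_mono.monovary hg_mono).integral_mul_integral_le_integral_mul
    (hf.integrable_of_forall_norm_le hC) (hg.integrable_of_forall_norm_le hD)
    ((hf.mul hg).integrable_of_forall_norm_le fun x ↦ norm_mul_le_of_le (hC x) (hD x))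

lemma monotone_integral_prod_right [Preorder α] [Preorder β] (π : Measure β) [IsFiniteMeasure π]
    {f : α × β → ℝ} (hf : Measurable f) (hf_mono : Monotone f) {C : ℝ} (hC : ∀ z, ‖f z‖ ≤ C) :
    Monotone fun x ↦ ∫ y, f (x, y) ∂π := by
  have hsection : ∀ x, Integrable (fun y ↦ f (x, y)) π := fun x ↦
    (hf.comp measurable_prodMk_left).integrable_of_forall_norm_le fun y ↦ hC (x, y)
  exact fun x x' hx ↦ integral_mono (hsection x) (hsection x') fun y ↦ hf_mono ⟨hx, le_rfl⟩

theorem IsAssociated.prod [Preorder α] [Preorder β] {ν : Measure α} {π : Measure β}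
    [IsFiniteMeasure ν] [IsFiniteMeasure π] (hν : ν.IsAssociated) (hπ : π.IsAssociated) :
    (ν.prod π).IsAssociated := by
  intro f g hf hg hf_mono hg_mono ⟨C, hC⟩ ⟨D, hD⟩
  have hfg : Measurable fun z ↦ f z * g z := hf.mul hg
  have hCD : ∀ z, ‖f z * g z‖ ≤ C * D := fun z ↦ norm_mul_le_of_le (hC z) (hD z)
  have hF := hf.stronglyMeasurable.integral_prod_right' (ν := π)
  have hG := hg.stronglyMeasurable.integral_prod_right' (ν := π)
  have hFG := hfg.stronglyMeasurable.integral_prod_right' (ν := π)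
  have hsection : ∀ {h : α × β → ℝ}, Measurable h → ∀ x, Measurable fun y ↦ h (x, y) :=
    fun hh x ↦ hh.comp measurable_prodMk_left
  have hbound : ∀ {h : α × β → ℝ} {K : ℝ}, (∀ z, ‖h z‖ ≤ K) →
      ∀ x, ‖∫ y, h (x, y) ∂π‖ ≤ K * π.real Set.univ :=
    fun hK x ↦ norm_integral_le_of_norm_le_const (.of_forall fun y ↦ hK (x, y))
  rw [integral_prod f (hf.integrable_of_forall_norm_le hC),
    integral_prod g (hg.integrable_of_forall_norm_le hD),
    integral_prod (fun z ↦ f z * g z) (hfg.integrable_of_forall_norm_le hCD)]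
  calc (∫ x, ∫ y, f (x, y) ∂π ∂ν) * (∫ x, ∫ y, g (x, y) ∂π ∂ν)
      ≤ ∫ x, (∫ y, f (x, y) ∂π) * (∫ y, g (x, y) ∂π) ∂ν :=
        hν hF.measurable hG.measurable (monotone_integral_prod_right π hf hf_mono hC)
          (monotone_integral_prod_right π hg hg_mono hD) ⟨_, hbound hC⟩ ⟨_, hbound hD⟩
    _ ≤ ∫ x, ∫ y, f (x, y) * g (x, y) ∂π ∂ν :=
        integral_mono
          ((hF.measurable.mul hG.measurable).integrable_of_forall_norm_le
            fun x ↦ norm_mul_le_of_le (hbound hC x) (hbound hD x))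
          (hFG.measurable.integrable_of_forall_norm_le (hbound hCD))
          fun x ↦ hπ (hsection hf x) (hsection hg x) (fun y y' hy ↦ hf_mono ⟨le_rfl, hy⟩)
            (fun y y' hy ↦ hg_mono ⟨le_rfl, hy⟩) ⟨C, fun y ↦ hC (x, y)⟩ ⟨D, fun y ↦ hD (x, y)⟩

theorem isAssociated_pi {n : ℕ} {α : Fin n → Type*} [∀ i, MeasurableSpace (α i)]
    [∀ i, Preorder (α i)] (μ : ∀ i, Measure (α i)) [∀ i, IsFiniteMeasure (μ i)]
    (hμ : ∀ i, (μ i).IsAssociated) : (Measure.pi μ).IsAssociated := by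
  induction n with
  | zero => rw [pi_of_empty μ]; exact isAssociated_dirac _
  | succ n ih =>
    have hsplit := (measurePreserving_piFinSuccAbove μ 0).symm
    rw [← hsplit.map_eq]
    exact ((hμ 0).prod (ih _ fun j ↦ hμ _)).map hsplit.measurable
      (MeasurableEquiv.monotone_piFinSuccAbove_symm 0)

theorem IsAssociated.integral_mul_integral_le_integral_mul [Preorder α] {μ : Measure α}
    (hμ : μ.IsAssociated) {f g : α → ℝ} (hf : Measurable f) (hg : Measurable g)
    (hf_mono : Monotone f) (hg_mono : Monotone g) (hfi : Integrable f μ) (hgi : Integrable g μ)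
    (hfgi : Integrable (fun x ↦ f x * g x) μ) :
    (∫ x, f x ∂μ) * (∫ x, g x ∂μ) ≤ ∫ x, f x * g x ∂μ := by
  have hfM (M : ℕ) : Measurable fun x ↦ clip M (f x) := (measurable_clip M).comp hf
  have hgM (M : ℕ) : Measurable fun x ↦ clip M (g x) := (measurable_clip M).comp hg
  have hlim_f : Tendsto (fun M : ℕ ↦ ∫ x, clip M (f x) ∂μ) atTop (𝓝 (∫ x, f x ∂μ)) :=
    tendsto_integral_of_dominated_convergence (fun x ↦ ‖f x‖)
      (fun M ↦ (hfM M).aestronglyMeasurable) hfi.norm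
      (fun M ↦ .of_forall fun x ↦ abs_clip_le_abs M.cast_nonneg (f x))
      (.of_forall fun x ↦ tendsto_clip (f x))
  have hlim_g : Tendsto (fun M : ℕ ↦ ∫ x, clip M (g x) ∂μ) atTop (𝓝 (∫ x, g x ∂μ)) :=
    tendsto_integral_of_dominated_convergence (fun x ↦ ‖g x‖)
      (fun M ↦ (hgM M).aestronglyMeasurable) hgi.norm
      (fun M ↦ .of_forall fun x ↦ abs_clip_le_abs M.cast_nonneg (g x))
      (.of_forall fun x ↦ tendsto_clip (g x))
  have hlim_fg : Tendsto (fun M : ℕ ↦ ∫ x, clip M (f x) * clip M (g x) ∂μ) atTop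
      (𝓝 (∫ x, f x * g x ∂μ)) :=
    tendsto_integral_of_dominated_convergence (fun x ↦ ‖f x * g x‖)
      (fun M ↦ ((hfM M).mul (hgM M)).aestronglyMeasurable) hfgi.norm
      (fun M ↦ .of_forall fun x ↦ by
        simpa only [norm_mul, Real.norm_eq_abs] using
          mul_le_mul (abs_clip_le_abs M.cast_nonneg (f x)) (abs_clip_le_abs M.cast_nonneg (g x))
            (abs_nonneg _) (abs_nonneg _))
      (.of_forall fun x ↦ (tendsto_clip (f x)).mul (tendsto_clip (g x)))
  exact le_of_tendsto_of_tendsto' (hlim_f.mul hlim_g) hlim_fg fun M ↦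
    hμ (hfM M) (hgM M) ((monotone_clip M).comp hf_mono) ((monotone_clip M).comp hg_mono)
      ⟨M, fun x ↦ abs_clip_le M.cast_nonneg (f x)⟩ ⟨M, fun x ↦ abs_clip_le M.cast_nonneg (g x)⟩

end MeasureTheory.Measure

/-- Esary–Proschan–Walkup: independent random variables are associated. If
`X 1, ..., X n` are independent real random variables and `f, g : ℝⁿ → ℝ` are
nondecreasing in each coordinate, then `Cov(f(X), g(X)) ≥ 0`, provided the
covariance is defined (i.e. `f(X)`, `g(X)` and their product are integrable). -/
theorem stmt4 {Ω : Type*} [MeasurableSpace Ω] (μ : Measure Ω) [IsProbabilityMeasure μ]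
    (n : ℕ) (X : Fin n → Ω → ℝ)
    (hmeas : ∀ i, Measurable (X i))
    (hindep : iIndepFun X μ)
    (f g : (Fin n → ℝ) → ℝ)
    (hfm : Measurable f) (hgm : Measurable g)
    (hf : Monotone f) (hg : Monotone g)
    (hfint : Integrable (fun ω => f (fun i => X i ω)) μ)
    (hgint : Integrable (fun ω => g (fun i => X i ω)) μ)
    (hfgint : Integrable (fun ω => f (fun i => X i ω) * g (fun i => X i ω)) μ) :
    (∫ ω, f (fun i => X i ω) ∂μ) * (∫ ω, g (fun i => X i ω) ∂μ) ≤
      ∫ ω, f (fun i => X i ω) * g (fun i => X i ω) ∂μ := by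
  set Y : Ω → Fin n → ℝ := fun ω i ↦ X i ω
  have hY : AEMeasurable Y μ := (measurable_pi_lambda _ hmeas).aemeasurable
  have hassoc : (μ.map Y).IsAssociated := by
    have := fun i ↦ Measure.isProbabilityMeasure_map (μ := μ) (hmeas i).aemeasurable
    rw [(iIndepFun_iff_map_fun_eq_pi_map fun i ↦ (hmeas i).aemeasurable).1 hindep]
    exact Measure.isAssociated_pi _ fun i ↦ Measure.isAssociated_of_linearOrder _
  have hfg : Measurable fun x ↦ f x * g x := hfm.mul hgm
  have key := hassoc.integral_mul_integral_le_integral_mul hfm hgm hf hg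
    ((integrable_map_measure hfm.aestronglyMeasurable hY).2 hfint)
    ((integrable_map_measure hgm.aestronglyMeasurable hY).2 hgint)
    ((integrable_map_measure hfg.aestronglyMeasurable hY).2 hfgint)
  rwa [integral_map hY hfm.aestronglyMeasurable, integral_map hY hgm.aestronglyMeasurable,
    integral_map hY hfg.aestronglyMeasurable] at key
end
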